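/- arXiv:2205.07072 — 2 statements merged into one kernel-verified Lean document; each statement's English description precedes it below -/
import Mathlib

section
/- Let P be a poset and X a coherent cutset of P. Then the map ν from the poset of simplices of the crosscut complex Γ_C(P,X) (ordered by inclusion) to the opposite of the crosscut poset Γ(P,X), given by ν(σ) = st(σ), is a well-defined order-preserving map. -/
/-- The star of an element: all elements comparable to `a`. -/
def starOf {α : Type*} [PartialOrder α] (a : α) : Set α := {x | x ≤ a ∨ a ≤ x}

/-- The star of a subset: elements comparable to every element of `A`. -/
def starSetOf {α : Type*} [PartialOrder α] (A : Set α) : Set α := ⋂ a ∈ A, starOf a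

/-- A subset is astral if it is contained in the star of some element. -/
def IsAstral {α : Type*} [PartialOrder α] (A : Set α) : Prop := ∃ x : α, A ⊆ starOf x

/-- One step of the comparability relation inside a subposet `S`. -/
def CompStep {α : Type*} [PartialOrder α] (S : Set α) (x y : α) : Prop :=
  x ∈ S ∧ y ∈ S ∧ (x ≤ y ∨ y ≤ x)

/-- `x` and `y` are connected inside the subposet `S`. -/
def ConnIn {α : Type*} [PartialOrder α] (S : Set α) (x y : α) : Prop :=
  Relation.ReflTransGen (CompStep S) x y

/-- A subposet is connected (as a subposet, via comparability). -/
def IsConnSub {α : Type*} [PartialOrder α] (S : Set α) : Prop :=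
  S.Nonempty ∧ ∀ x ∈ S, ∀ y ∈ S, ConnIn S x y

/-- The connected component of `x` in the subposet `S`. -/
def compOf {α : Type*} [PartialOrder α] (S : Set α) (x : α) : Set α :=
  {y | y ∈ S ∧ ConnIn S x y}

/-- `C` is a connected component of the subposet `S`. -/
def IsCompOf {α : Type*} [PartialOrder α] (S C : Set α) : Prop :=
  ∃ x ∈ S, C = compOf S x

/-- The crosscut poset `Γ(P,X)`: connected components of the nonempty `st(A)`, `∅ ≠ A ⊆ X`. -/
def crosscutPoset {α : Type*} [PartialOrder α] (X : Set α) : Set (Set α) :=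
  {C | ∃ A : Set α, A.Nonempty ∧ A ⊆ X ∧ IsCompOf (starSetOf A) C}

/-- The subposet `Γ_f(P,X)` coming from finite subsets `A ⊆ X`. -/
def crosscutPosetF {α : Type*} [PartialOrder α] (X : Set α) : Set (Set α) :=
  {C | ∃ A : Set α, A.Nonempty ∧ A.Finite ∧ A ⊆ X ∧ IsCompOf (starSetOf A) C}

/-- `X` is a cutset: every finite chain extends to a chain by an element of `X`. -/
def IsCutset {α : Type*} [PartialOrder α] (X : Set α) : Prop :=
  ∀ σ : Set α, σ.Finite → IsChain (· ≤ ·) σ → ∃ a ∈ X, IsChain (· ≤ ·) (insert a σ)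

/-- A subset `X` is coherent: every finite nonempty bounded subset of `X` has a meet or a join. -/
def IsCoherent {α : Type*} [PartialOrder α] (X : Set α) : Prop :=
  ∀ A ⊆ X, A.Finite → A.Nonempty → (BddAbove A ∨ BddBelow A) →
    (∃ z, IsGLB A z) ∨ (∃ z, IsLUB A z)

/-- The simplices of the crosscut complex `Γ_C(P,X)`: nonempty finite astral subsets of `X`. -/
def IsCCSimplex {α : Type*} [PartialOrder α] (X σ : Set α) : Prop :=
  σ ⊆ X ∧ σ.Finite ∧ σ.Nonempty ∧ IsAstral σ

/-- `I_X(D) = {x ∈ X | D ⊆ st(x)}`. -/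
def astralIdx {α : Type*} [PartialOrder α] (X D : Set α) : Set α :=
  {x ∈ X | D ⊆ starOf x}

/-- The set of maximal elements of a poset. -/
def mxlSet (α : Type*) [PartialOrder α] : Set α := {a | ∀ b, a ≤ b → b = a}

/-- The set of minimal elements of a poset. -/
def mnlSet (α : Type*) [PartialOrder α] : Set α := {a | ∀ b, b ≤ a → b = a}

/-- Type synonym carrying the Alexandroff topology (down-sets are open) of a preorder. -/
def AlexSp (β : Type*) := β

instance {β : Type*} [Preorder β] : Preorder (AlexSp β) := inferInstanceAs (Preorder β)
instance {β : Type*} [PartialOrder β] : PartialOrder (AlexSp β) :=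
  inferInstanceAs (PartialOrder β)

instance {β : Type*} [Preorder β] : TopologicalSpace (AlexSp β) where
  IsOpen U := IsLowerSet U
  isOpen_univ := isLowerSet_univ
  isOpen_inter _ _ h₁ h₂ := h₁.inter h₂
  isOpen_sUnion _ h := isLowerSet_sUnion h

lemma mem_starSetOf {α : Type*} [PartialOrder α] {A : Set α} {x : α} :
    x ∈ starSetOf A ↔ ∀ a ∈ A, x ≤ a ∨ a ≤ x := by
  simp [starSetOf, starOf]

lemma star_connected {α : Type*} [PartialOrder α] {X : Set α}
    (hcoh : IsCoherent X) {σ : Set α} (hσX : σ ⊆ X) (hfin : σ.Finite)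
    (hne : σ.Nonempty) :
    ∀ y ∈ starSetOf σ, ∀ z ∈ starSetOf σ, ConnIn (starSetOf σ) y z := by
  intro y hy z hz
  have hy' : ∀ a ∈ σ, y ≤ a ∨ a ≤ y := mem_starSetOf.mp hy
  have hz' : ∀ a ∈ σ, z ≤ a ∨ a ≤ z := mem_starSetOf.mp hz
  have path2 : ∀ w, w ∈ starSetOf σ → (y ≤ w ∨ w ≤ y) → (z ≤ w ∨ w ≤ z) →
      ConnIn (starSetOf σ) y z := by
    intro w hw h1 h2
    exact Relation.ReflTransGen.head ⟨hy, hw, h1⟩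
      (Relation.ReflTransGen.single ⟨hw, hz, h2.symm⟩)
  by_cases h1 : ∃ a ∈ σ, y ≤ a ∧ z ≤ a
  · -- elements above both y and z
    obtain ⟨a₀, ha₀, hya₀, hza₀⟩ := h1
    set T : Set α := {a ∈ σ | y ≤ a ∧ z ≤ a} with hT
    have hTX : T ⊆ X := fun a ha => hσX ha.1
    have hTfin : T.Finite := hfin.subset fun a ha => ha.1
    have hTne : T.Nonempty := ⟨a₀, ha₀, hya₀, hza₀⟩
    have hTbdd : BddBelow T := ⟨y, fun a ha => ha.2.1⟩
    rcases hcoh T hTX hTfin hTne (Or.inr hTbdd) with ⟨w, hw⟩ | ⟨w, hw⟩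
    · have hyw : y ≤ w := hw.2 fun a ha => ha.2.1
      have hzw : z ≤ w := hw.2 fun a ha => ha.2.2
      refine path2 w (mem_starSetOf.mpr fun a ha => ?_) (Or.inl hyw) (Or.inl hzw)
      by_cases haT : y ≤ a ∧ z ≤ a
      · exact Or.inl (hw.1 ⟨ha, haT⟩)
      · rcases hy' a ha with h | h
        · rcases hz' a ha with h' | h'
          · exact absurd ⟨h, h'⟩ haT
          · exact Or.inr (h'.trans hzw)
        · exact Or.inr (h.trans hyw)
    · have hyw : y ≤ w := hya₀.trans (hw.1 ⟨ha₀, hya₀, hza₀⟩)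
      have hzw : z ≤ w := hza₀.trans (hw.1 ⟨ha₀, hya₀, hza₀⟩)
      refine path2 w (mem_starSetOf.mpr fun a ha => ?_) (Or.inl hyw) (Or.inl hzw)
      by_cases haT : y ≤ a ∧ z ≤ a
      · exact Or.inr (hw.1 ⟨ha, haT⟩)
      · rcases hy' a ha with h | h
        · rcases hz' a ha with h' | h'
          · exact absurd ⟨h, h'⟩ haT
          · exact Or.inr (h'.trans hzw)
        · exact Or.inr (h.trans hyw)
  · by_cases h2 : ∃ a ∈ σ, a ≤ y ∧ a ≤ z
    · -- elements below both y and z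
      obtain ⟨a₀, ha₀, hya₀, hza₀⟩ := h2
      set T : Set α := {a ∈ σ | a ≤ y ∧ a ≤ z} with hT
      have hTX : T ⊆ X := fun a ha => hσX ha.1
      have hTfin : T.Finite := hfin.subset fun a ha => ha.1
      have hTne : T.Nonempty := ⟨a₀, ha₀, hya₀, hza₀⟩
      have hTbdd : BddAbove T := ⟨y, fun a ha => ha.2.1⟩
      rcases hcoh T hTX hTfin hTne (Or.inl hTbdd) with ⟨w, hw⟩ | ⟨w, hw⟩
      · have hwy : w ≤ y := (hw.1 ⟨ha₀, hya₀, hza₀⟩).trans hya₀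
        have hwz : w ≤ z := (hw.1 ⟨ha₀, hya₀, hza₀⟩).trans hza₀
        refine path2 w (mem_starSetOf.mpr fun a ha => ?_) (Or.inr hwy) (Or.inr hwz)
        by_cases haT : a ≤ y ∧ a ≤ z
        · exact Or.inl (hw.1 ⟨ha, haT⟩)
        · rcases hy' a ha with h | h
          · exact Or.inl (hwy.trans h)
          · rcases hz' a ha with h' | h'
            · exact Or.inl (hwz.trans h')
            · exact absurd ⟨h, h'⟩ haT
      · have hwy : w ≤ y := hw.2 fun a ha => ha.2.1
        have hwz : w ≤ z := hw.2 fun a ha => ha.2.2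
        refine path2 w (mem_starSetOf.mpr fun a ha => ?_) (Or.inr hwy) (Or.inr hwz)
        by_cases haT : a ≤ y ∧ a ≤ z
        · exact Or.inr (hw.1 ⟨ha, haT⟩)
        · rcases hy' a ha with h | h
          · exact Or.inl (hwy.trans h)
          · rcases hz' a ha with h' | h'
            · exact Or.inl (hwz.trans h')
            · exact absurd ⟨h, h'⟩ haT
    · -- every element of σ lies between y and z (in one direction)
      by_cases hyz : y = z
      · subst hyz; exact Relation.ReflTransGen.refl
      push_neg at h1 h2
      have htype : ∀ a ∈ σ, (y ≤ a ∧ a ≤ z) ∨ (z ≤ a ∧ a ≤ y) := by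
        intro a ha
        rcases hy' a ha with h | h
        · rcases hz' a ha with h' | h'
          · exact absurd h' (h1 a ha h)
          · exact Or.inl ⟨h, h'⟩
        · rcases hz' a ha with h' | h'
          · exact Or.inr ⟨h', h⟩
          · exact absurd h' (h2 a ha h)
      obtain ⟨a₀, ha₀⟩ := hne
      rcases htype a₀ ha₀ with ⟨hA1, hA2⟩ | ⟨hB1, hB2⟩
      · have hall : ∀ a ∈ σ, y ≤ a ∧ a ≤ z := by
          intro a ha
          rcases htype a ha with h | ⟨h1', h2'⟩
          · exact h
          · exact absurd (le_antisymm (hA1.trans hA2) (h1'.trans h2')) hyz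
        rcases hcoh σ hσX hfin ⟨a₀, ha₀⟩
            (Or.inl ⟨z, fun a ha => (hall a ha).2⟩) with ⟨w, hw⟩ | ⟨w, hw⟩
        · have hyw : y ≤ w := hw.2 fun a ha => (hall a ha).1
          have hwz : w ≤ z := (hw.1 ha₀).trans hA2
          exact path2 w (mem_starSetOf.mpr fun a ha => Or.inl (hw.1 ha))
            (Or.inl hyw) (Or.inr hwz)
        · have hyw : y ≤ w := hA1.trans (hw.1 ha₀)
          have hwz : w ≤ z := hw.2 fun a ha => (hall a ha).2
          exact path2 w (mem_starSetOf.mpr fun a ha => Or.inr (hw.1 ha))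
            (Or.inl hyw) (Or.inr hwz)
      · have hall : ∀ a ∈ σ, z ≤ a ∧ a ≤ y := by
          intro a ha
          rcases htype a ha with ⟨h1', h2'⟩ | h
          · exact absurd (le_antisymm (h1'.trans h2') (hB1.trans hB2)) hyz
          · exact h
        rcases hcoh σ hσX hfin ⟨a₀, ha₀⟩
            (Or.inl ⟨y, fun a ha => (hall a ha).2⟩) with ⟨w, hw⟩ | ⟨w, hw⟩
        · have hzw : z ≤ w := hw.2 fun a ha => (hall a ha).1
          have hwy : w ≤ y := (hw.1 ha₀).trans hB2
          exact path2 w (mem_starSetOf.mpr fun a ha => Or.inl (hw.1 ha))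
            (Or.inr hwy) (Or.inl hzw)
        · have hzw : z ≤ w := hB1.trans (hw.1 ha₀)
          have hwy : w ≤ y := hw.2 fun a ha => (hall a ha).2
          exact path2 w (mem_starSetOf.mpr fun a ha => Or.inr (hw.1 ha))
            (Or.inr hwy) (Or.inl hzw)

/-- The map `ν(σ) = st(σ)` from simplices of `Γ_C(P,X)` to `Γ(P,X)ᵒᵖ` is well defined
and order-preserving. -/
theorem stmt_7 {α : Type*} [PartialOrder α] {X : Set α}
    (hcut : IsCutset X) (hcoh : IsCoherent X) :
    (∀ σ, IsCCSimplex X σ → starSetOf σ ∈ crosscutPoset X) ∧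
      ∀ σ τ, IsCCSimplex X σ → IsCCSimplex X τ → σ ⊆ τ → starSetOf τ ⊆ starSetOf σ := by
  constructor
  · intro σ hσ
    obtain ⟨hσX, hfin, hne, x, hx⟩ := hσ
    have hxS : x ∈ starSetOf σ := mem_starSetOf.mpr fun a ha => (hx ha).symm
    refine ⟨σ, hne, hσX, x, hxS, ?_⟩
    ext y
    constructor
    · intro hyS
      exact ⟨hyS, star_connected hcoh hσX hfin hne x hxS y hyS⟩
    · intro hy
      exact hy.1
  · intro σ τ _ _ hsub w hw
    exact mem_starSetOf.mpr fun a ha => mem_starSetOf.mp hw a (hsub ha)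
end

section
/- Let P be a poset such that mxl(P), the set of maximal elements, is a cutset of P (equivalently, every element of P lies below some maximal element), and suppose every C ∈ Γ(P, mxl(P)) has a maximum element. Let P₀ = {max C | C ∈ Γ(P, mxl(P))} with the induced order, and i : P₀ → P the inclusion. Then there exists an order-preserving retraction r : P → P₀ with r∘i = id and i∘r ≥ id_P. In particular, P₀ is a strong deformation retract of P. -/
/-! For `x : P` let `A x` be the set of maximal elements above `x`. The component `C x` of `x`
in `st(A x)` lies in `Γ(P, mxl P)` and is the least member of `Γ(P, mxl P)` containing `x`: if
`x ∈ C = comp_{st(A₀)}(x₀)` then `x` is comparable to, hence below, each maximal `a ∈ A₀`, so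
`A₀ ⊆ A x` and `st(A x) ⊆ st(A₀)`. Moreover `x ≤ y` gives `C x ⊆ C y`, since `st(A x) ⊆ st(A y)`
and `x`, `y` are adjacent there. Hence `r x := max (C x)` is monotone, satisfies `x ≤ r x`, and
fixes `max C` for every `C ∈ Γ(P, mxl P)`. -/

section CrosscutRetraction

variable {α : Type*} [PartialOrder α]

lemma ConnIn.mono {S T : Set α} (h : S ⊆ T) {x y : α} (hc : ConnIn S x y) : ConnIn T x y :=
  Relation.ReflTransGen.mono (fun _ _ hab => ⟨h hab.1, h hab.2.1, hab.2.2⟩) _ _ hc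

lemma starSetOf_anti {A B : Set α} (h : A ⊆ B) : starSetOf B ⊆ starSetOf A := by
  simp only [starSetOf, Set.subset_def, Set.mem_iInter]
  exact fun z hz a ha => hz a (h ha)

lemma mem_starSetOf_of_forall_le {A : Set α} {x : α} (h : ∀ a ∈ A, x ≤ a) :
    x ∈ starSetOf A := by
  simp only [starSetOf, Set.mem_iInter]
  exact fun a ha => Or.inl (h a ha)

lemma mem_compOf_self {S : Set α} {x : α} (hx : x ∈ S) : x ∈ compOf S x :=
  ⟨hx, .refl⟩

lemma compOf_subset_compOf {S T : Set α} (hST : S ⊆ T) {x y : α} (hyx : ConnIn T y x) :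
    compOf S x ⊆ compOf T y :=
  fun _ hz => ⟨hST hz.1, hyx.trans (hz.2.mono hST)⟩

def mxlAbove (x : α) : Set α := {a ∈ mxlSet α | x ≤ a}

def mxlComp (x : α) : Set α := compOf (starSetOf (mxlAbove x)) x

lemma mxlAbove_anti {x y : α} (hxy : x ≤ y) : mxlAbove y ⊆ mxlAbove x :=
  fun _ ha => ⟨ha.1, hxy.trans ha.2⟩

lemma subset_mxlAbove_of_mem_starSetOf {A : Set α} (hA : A ⊆ mxlSet α) {x : α}
    (hx : x ∈ starSetOf A) : A ⊆ mxlAbove x := by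
  intro a ha
  simp only [starSetOf, Set.mem_iInter] at hx
  rcases hx a ha with hxa | hax
  · exact ⟨hA ha, hxa⟩
  · exact ⟨hA ha, (hA ha x hax).le⟩

lemma mem_starSetOf_mxlAbove_of_le {x y : α} (hxy : x ≤ y) : x ∈ starSetOf (mxlAbove y) :=
  mem_starSetOf_of_forall_le fun _ ha => hxy.trans ha.2

lemma mem_mxlComp_self (x : α) : x ∈ mxlComp x :=
  mem_compOf_self (mem_starSetOf_mxlAbove_of_le le_rfl)

lemma mxlComp_mem_crosscutPoset (hmx : ∀ x : α, ∃ a ∈ mxlSet α, x ≤ a) (x : α) :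
    mxlComp x ∈ crosscutPoset (mxlSet α) :=
  ⟨mxlAbove x, hmx x, fun _ ha => ha.1, x, mem_starSetOf_mxlAbove_of_le le_rfl, rfl⟩

lemma mxlComp_mono {x y : α} (hxy : x ≤ y) : mxlComp x ⊆ mxlComp y :=
  compOf_subset_compOf (starSetOf_anti (mxlAbove_anti hxy)) <| .single
    ⟨mem_starSetOf_mxlAbove_of_le le_rfl, mem_starSetOf_mxlAbove_of_le hxy, Or.inr hxy⟩

lemma mxlComp_subset_of_mem {C : Set α} (hC : C ∈ crosscutPoset (mxlSet α)) {x : α}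
    (hx : x ∈ C) : mxlComp x ⊆ C := by
  obtain ⟨A, -, hA, x₀, -, rfl⟩ := hC
  exact compOf_subset_compOf (starSetOf_anti (subset_mxlAbove_of_mem_starSetOf hA hx.1)) hx.2

end CrosscutRetraction

/-- If every element of `P` lies below a maximal element and every `C ∈ Γ(P, mxl P)` has a
maximum, then `P₀ = {max C | C ∈ Γ(P, mxl P)}` is a retract of `P` via a monotone
retraction `r` with `i ∘ r ≥ id`. -/
theorem stmt_11 {α : Type*} [PartialOrder α]
    (hmx : ∀ x : α, ∃ a ∈ mxlSet α, x ≤ a)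
    (hmax : ∀ C ∈ crosscutPoset (mxlSet α), ∃ m, IsGreatest C m) :
    ∃ r : α → α, Monotone r ∧
      (∀ x, r x ∈ {z | ∃ C ∈ crosscutPoset (mxlSet α), IsGreatest C z}) ∧
      (∀ x ∈ {z | ∃ C ∈ crosscutPoset (mxlSet α), IsGreatest C z}, r x = x) ∧
      ∀ x, x ≤ r x := by
  choose r hr using fun x => hmax _ (mxlComp_mem_crosscutPoset hmx x)
  have le_r (x : α) : x ≤ r x := (hr x).2 (mem_mxlComp_self x)
  refine ⟨r, fun x y hxy => (hr y).2 (mxlComp_mono hxy (hr x).1),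
    fun x => ⟨_, mxlComp_mem_crosscutPoset hmx x, hr x⟩, ?_, le_r⟩
  rintro x ⟨C, hC, hxC⟩
  exact le_antisymm (hxC.2 (mxlComp_subset_of_mem hC hxC.1 (hr x).1)) (le_r x)
end
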